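/- Suppose f is smooth on 𝕋^d and x, y are points where f attains the equality f(x) - f(y) = max_{z₁,z₂}(f(z₁) - f(z₂) - K|z₁-z₂|) + K|x-y| in the sense that (z₁,z₂) ↦ f(z₁)-f(z₂)-K(|z₁-z₂|+ε) is maximized (and equals 0) at (x,y), with x ≠ y. Then [-(-Δ)^{α/2} f](x) - [-(-Δ)^{α/2} f](y) ≤ 0. -/

import Mathlib

open MeasureTheory Real Filter Set Topology

noncomputable section

/-- `ℝ^d`, the ambient space; the torus `𝕋^d` is modeled by `2π`-periodic functions on it. -/
abbrev E (d : ℕ) := EuclideanSpace ℝ (Fin d)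

/-- A fundamental domain `[-π,π)^d` for the torus `𝕋^d`. -/
def Torus (d : ℕ) : Set (E d) := (WithLp.equiv 2 (Fin d → ℝ)) ⁻¹' (Set.univ.pi fun _ => Set.Ico (-π) π)

def toE (d : ℕ) (v : Fin d → ℝ) : E d := (WithLp.equiv 2 (Fin d → ℝ)).symm v

/-- The lattice point `2πn ∈ ℝ^d`. -/
def latt (d : ℕ) (n : Fin d → ℤ) : E d := toE d fun i => 2 * π * (n i : ℝ)

/-- A function on `ℝ^d` descends to the torus iff it is `2πℤ^d`-periodic. -/
def TorusPeriodic (d : ℕ) (f : E d → ℝ) : Prop :=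
  ∀ (x : E d) (n : Fin d → ℤ), f (x + latt d n) = f x

lemma my_norm_le {d : ℕ} (w : E d) (hb : ∀ i, |w i| ≤ π) : ‖w‖ ≤ π * Real.sqrt d := by
  rw [EuclideanSpace.norm_eq]
  have h1 : ∑ i, ‖w i‖ ^ 2 ≤ ∑ _i : Fin d, π ^ 2 := by
    apply Finset.sum_le_sum; intro i _
    rw [Real.norm_eq_abs]
    nlinarith [hb i, abs_nonneg (w i), pi_pos]
  calc √(∑ i, ‖w i‖ ^ 2) ≤ √(∑ _i : Fin d, π ^ 2) := Real.sqrt_le_sqrt h1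
    _ = π * Real.sqrt d := by
        rw [Finset.sum_const, Finset.card_fin, nsmul_eq_mul,
          Real.sqrt_mul (by positivity), Real.sqrt_sq pi_pos.le, mul_comm]

lemma my_bound {d : ℕ} {f : E d → ℝ} {K ε : ℝ} (hfper : TorusPeriodic d f)
    (hmod : ∀ z₁ z₂ : E d, f z₁ - f z₂ ≤ K * (‖z₁ - z₂‖ + ε)) (hK : 0 ≤ K) :
    ∀ z : E d, |f z - f 0| ≤ K * (π * Real.sqrt d + ε) := by
  intro z
  set n : Fin d → ℤ := fun i => round (z i / (2 * π)) with hn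
  set w : E d := z - latt d n with hw
  have hzw : f z = f w := by
    have := hfper w n
    rw [hw] at this ⊢
    simpa using this
  have hwi : ∀ i, |w i| ≤ π := by
    intro i
    have hwi' : w i = z i - 2 * π * (n i : ℝ) := by
      simp [hw, latt, toE]
    have h2 : |z i / (2 * π) - round (z i / (2 * π))| ≤ 1 / 2 := abs_sub_round _
    have hπ : (0:ℝ) < 2 * π := by positivity
    rw [hwi', hn]
    have : z i - 2 * π * (round (z i / (2 * π)) : ℝ)
        = (2 * π) * (z i / (2 * π) - round (z i / (2 * π))) := by
      field_simp
    rw [this, abs_mul, abs_of_pos hπ]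
    nlinarith [pi_pos]
  have hwnorm : ‖w‖ ≤ π * Real.sqrt d := my_norm_le w hwi
  have h1 := hmod w 0
  have h2 := hmod 0 w
  have hnw : ‖(0:E d) - w‖ = ‖w‖ := by simp
  rw [hnw] at h2
  rw [sub_zero] at h1
  rw [hzw, abs_sub_le_iff]
  constructor <;> nlinarith [norm_nonneg w, Real.sqrt_nonneg (d:ℝ), pi_pos]

lemma my_integrable {d : ℕ} {s : ℝ} (hs : (d : ℝ) < s) (hs0 : 0 < s) {l : ℝ} (hl : 0 < l)
    (x : E d) (h : E d → ℝ) (hc : Continuous h) (C : ℝ) (hC : ∀ z, |h z| ≤ C) :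
    IntegrableOn (fun z => h z / ‖x - z‖ ^ s) {z : E d | l ≤ ‖x - z‖} := by
  have hCnn : 0 ≤ C := (abs_nonneg _).trans (hC x)
  have hmeas : MeasurableSet {z : E d | l ≤ ‖x - z‖} :=
    (isClosed_le continuous_const ((continuous_const.sub continuous_id).norm)).measurableSet
  have h0 : Integrable (fun w : E d => (1 + ‖w‖) ^ (-s)) :=
    integrable_one_add_norm (by simpa using hs)
  have h1 : Integrable (fun z : E d => (1 + ‖x - z‖) ^ (-s)) :=
    h0.comp_sub_left x
  have h2 : Integrable (fun z : E d => C * (1 + 1/l) ^ s * (1 + ‖x - z‖) ^ (-s)) :=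
    h1.const_mul _
  have hcont : Continuous fun z : E d => ‖x - z‖ ^ s :=
    ((continuous_const.sub continuous_id).norm).rpow_const (fun z => Or.inr hs0.le)
  have hasm : AEStronglyMeasurable (fun z => h z / ‖x - z‖ ^ s)
      (volume.restrict {z : E d | l ≤ ‖x - z‖}) :=
    ((hc.measurable.div hcont.measurable).aestronglyMeasurable).restrict
  refine Integrable.mono' h2.integrableOn hasm ?_
  · refine (ae_restrict_iff' hmeas).2 (ae_of_all _ fun z hz => ?_)
    have hr : l ≤ ‖x - z‖ := hz
    have hrpos : 0 < ‖x - z‖ := hl.trans_le hr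
    set r := ‖x - z‖
    have hrs : 0 < r ^ s := Real.rpow_pos_of_pos hrpos s
    have h1r : 0 < 1 + r := by positivity
    have hkey : (1 + r) ^ s ≤ (1 + 1/l) ^ s * r ^ s := by
      rw [← Real.mul_rpow (by positivity) hrpos.le]
      apply Real.rpow_le_rpow h1r.le _ hs0.le
      have : 1 ≤ r / l := (one_le_div hl).2 hr
      have : (1 + 1/l) * r = r + r / l := by field_simp
      rw [this]; linarith
    have h1rs : 0 < (1 + r) ^ s := Real.rpow_pos_of_pos h1r s
    have goal2 : |h z| / r ^ s ≤ (C * (1 + 1/l) ^ s) / (1 + r) ^ s := by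
      rw [div_le_div_iff₀ hrs h1rs]
      calc |h z| * (1+r)^s ≤ C * ((1+1/l)^s * r^s) := mul_le_mul (hC z) hkey h1rs.le hCnn
        _ = C * (1+1/l)^s * r^s := by ring
    calc ‖h z / r ^ s‖ = |h z| / r ^ s := by
          rw [norm_div, Real.norm_eq_abs, Real.norm_eq_abs, abs_of_pos hrs]
      _ ≤ (C * (1 + 1/l) ^ s) / (1 + r) ^ s := goal2
      _ = C * (1 + 1/l) ^ s * (1 + r) ^ (-s) := by
          rw [Real.rpow_neg h1r.le, div_eq_mul_inv]

/-- at a breaking point `(x,y)` of the modulus `K(|·| + ε)` (where the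
inequality `f(z₁)-f(z₂) ≤ K(|z₁-z₂|+ε)` becomes an equality, `x ≠ y`), the dissipative
term satisfies `[-(-Δ)^{α/2}f](x) - [-(-Δ)^{α/2}f](y) ≤ 0`. -/
theorem stmt10 (d : ℕ) (hd : 0 < d) (α K ε Cα : ℝ) (hα : α ∈ Set.Ioo (0 : ℝ) 2)
    (hK : 0 < K) (hε : 0 < ε) (hCα : 0 < Cα)
    (Λ : (E d → ℝ) → (E d → ℝ))
    (hΛ : ∀ h : E d → ℝ, ContDiff ℝ (⊤ : ℕ∞) h → TorusPeriodic d h → ∀ x : E d,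
      Filter.Tendsto (fun l : ℝ => Cα * ∫ y in {y : E d | l ≤ ‖x - y‖},
          (h x - h y) / ‖x - y‖ ^ (α + (d : ℝ)))
        (nhdsWithin 0 (Set.Ioi 0)) (nhds (Λ h x)))
    (f : E d → ℝ) (hf : ContDiff ℝ (⊤ : ℕ∞) f) (hfper : TorusPeriodic d f)
    (hmod : ∀ z₁ z₂ : E d, f z₁ - f z₂ ≤ K * (‖z₁ - z₂‖ + ε))
    (x y : E d) (hxy : x ≠ y)
    (heq : f x - f y = K * (‖x - y‖ + ε)) :
    -(Λ f x) - -(Λ f y) ≤ 0 := by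
  have hs : (d : ℝ) < α + (d : ℝ) := by linarith [hα.1]
  have hs0 : (0:ℝ) < α + (d : ℝ) := by
    have : (0:ℝ) ≤ (d:ℝ) := Nat.cast_nonneg d
    linarith [hα.1]
  set s : ℝ := α + (d : ℝ) with hsdef
  set M : ℝ := K * (π * Real.sqrt d + ε) with hM
  have hb0 : ∀ z : E d, |f z - f 0| ≤ M := my_bound hfper hmod hK.le
  set C : ℝ := 2 * M with hC
  have hCb : ∀ a b : E d, |f a - f b| ≤ C := by
    intro a b
    have h1 := hb0 a; have h2 := hb0 b
    rw [hC]
    calc |f a - f b| = |(f a - f 0) - (f b - f 0)| := by ring_nf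
      _ ≤ |f a - f 0| + |f b - f 0| := abs_sub _ _
      _ ≤ 2 * M := by linarith
  have key : ∀ l ∈ Set.Ioi (0:ℝ),
      (Cα * ∫ z in {z : E d | l ≤ ‖y - z‖}, (f y - f z) / ‖y - z‖ ^ s)
        ≤ Cα * ∫ z in {z : E d | l ≤ ‖x - z‖}, (f x - f z) / ‖x - z‖ ^ s := by
    intro l hl
    rw [Set.mem_Ioi] at hl
    set Sx : Set (E d) := {z : E d | l ≤ ‖x - z‖} with hSx
    set Sy : Set (E d) := {z : E d | l ≤ ‖y - z‖} with hSy
    have hmeasSx : MeasurableSet Sx :=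
      (isClosed_le continuous_const ((continuous_const.sub continuous_id).norm)).measurableSet
    have hmeasSy : MeasurableSet Sy :=
      (isClosed_le continuous_const ((continuous_const.sub continuous_id).norm)).measurableSet
    set Fx : E d → ℝ := fun z => (f x - f z) / ‖x - z‖ ^ s with hFx
    set Fy : E d → ℝ := fun z => (f y - f z) / ‖y - z‖ ^ s with hFy
    set g : E d → ℝ := fun z => (f x - f (z + (x - y))) / ‖y - z‖ ^ s with hg
    have hIy : IntegrableOn Fy Sy :=
      my_integrable hs hs0 hl y _ (continuous_const.sub hf.continuous) C (fun z => hCb y z)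
    have hIg : IntegrableOn g Sy := by
      refine my_integrable hs hs0 hl y _ ?_ C (fun z => hCb x _)
      exact continuous_const.sub (hf.continuous.comp (continuous_id.add continuous_const))
    have e1 : ∀ z : E d, x - (z + (x - y)) = y - z := fun z => by abel
    have hset : ∀ z : E d, z + (x - y) ∈ Sx ↔ z ∈ Sy := fun z => by
      simp only [hSx, hSy, Set.mem_setOf_eq, e1 z]
    have hind : ∀ z : E d, Sx.indicator Fx (z + (x - y)) = Sy.indicator g z := by
      intro z
      by_cases hz : z ∈ Sy
      · rw [Set.indicator_of_mem ((hset z).mpr hz), Set.indicator_of_mem hz]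
        simp only [hFx, hg, e1 z]
      · rw [Set.indicator_of_notMem (fun h => hz ((hset z).mp h)),
          Set.indicator_of_notMem hz]
    have heqint : ∫ z in Sx, Fx z = ∫ z in Sy, g z := by
      rw [← integral_indicator hmeasSx, ← integral_indicator hmeasSy]
      rw [← integral_add_right_eq_self (fun z => Sx.indicator Fx z) (x - y)]
      exact integral_congr_ae (ae_of_all _ hind)
    have hmono : ∫ z in Sy, Fy z ≤ ∫ z in Sy, g z := by
      refine setIntegral_mono_on hIy hIg hmeasSy fun z hz => ?_
      have hrpos : 0 < ‖y - z‖ := hl.trans_le hz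
      have hrs : 0 < ‖y - z‖ ^ s := Real.rpow_pos_of_pos hrpos s
      have hnum : f y - f z ≤ f x - f (z + (x - y)) := by
        have h1 := hmod (z + (x - y)) z
        have h2 : ‖z + (x - y) - z‖ = ‖x - y‖ := by
          congr 1; abel
        rw [h2] at h1
        linarith
      exact div_le_div_of_nonneg_right hnum hrs.le |>.trans_eq rfl
    calc Cα * ∫ z in Sy, Fy z ≤ Cα * ∫ z in Sy, g z :=
          mul_le_mul_of_nonneg_left hmono hCα.le
      _ = Cα * ∫ z in Sx, Fx z := by rw [heqint]
  have h1 := hΛ f hf hfper x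
  have h2 := hΛ f hf hfper y
  have hle : Λ f y ≤ Λ f x :=
    le_of_tendsto_of_tendsto h2 h1 (eventually_nhdsWithin_of_forall key)
  linarith
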